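/- For Φ_i = Σ_x 1[N_x = i] from a multinomial sample of size n: if 2i ≤ n, then E[Φ_i²] = f_i(n) + Σ_{x≠y} (n!/(i!²(n-2i)!))·p_x^i p_y^i (1-p_x-p_y)^{n-2i}; if 2i > n, then E[Φ_i²] = f_i(n). Consequently Var(Φ_i) = E[Φ_i²] - f_i(n)². -/

import Mathlib

/-!
Expanding `Φ_i` and `Φ_i²` into indicators, both moments become sums over samples `ω` of
the weight `∏ j, p (ω j)` restricted to prescribed occupancy numbers. These are coefficients
of generating functions: `∑_ω (∏ j, p (ω j)) T ^ N_x(ω) = (p_x T + (1 - p_x)) ^ n` by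
expanding the `n`-th power, and running the same identity with weights in `ℝ[T]` that mark a
second symbol `y` gives the joint weight `C(n,i) C(n-i,k) p_x^i p_y^k (1 - p_x - p_y)^(n-i-k)`
of `N_x = i, N_y = k`.
-/

open Finset MeasureTheory ProbabilityTheory

namespace Polynomial

theorem coeff_C_mul_X_add_C_pow {R : Type*} [CommSemiring R] (a b : R) (n k : ℕ) :
    ((C a * X + C b) ^ n).coeff k = n.choose k * a ^ k * b ^ (n - k) := by
  have hterm (m : ℕ) : (C a * X) ^ m * C b ^ (n - m) * (n.choose m : R[X])
      = C (n.choose m * a ^ m * b ^ (n - m)) * X ^ m := by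
    simp only [map_mul, map_pow, map_natCast]; ring
  simp_rw [add_pow, hterm, finsetSum_coeff, coeff_C_mul_X_pow, sum_ite_eq]
  split_ifs with h
  · rfl
  · rw [Nat.choose_eq_zero_of_lt (by simpa [Nat.lt_succ_iff] using h)]; simp

end Polynomial

section Occupancy

open Polynomial

variable {α R : Type*} [DecidableEq α] [CommSemiring R]

-- `occupancy ω x` is `N_x` of the sample `ω`, and `fingerprint i ω` is `Φ_i`.
def occupancy {n : ℕ} (ω : Fin n → α) (x : α) : ℕ := ∑ j, if ω j = x then 1 else 0

theorem prod_C_mul_X_pow_occupancy (f : α → R) {n : ℕ} (ω : Fin n → α) (x : α) :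
    ∏ j, C (f (ω j)) * X ^ (if ω j = x then 1 else 0)
      = C (∏ j, f (ω j)) * X ^ occupancy ω x := by
  rw [prod_mul_distrib, map_prod, prod_pow_eq_pow_sum, occupancy]

theorem sum_C_mul_X_pow_ite (f : α → R) {s : Finset α} {x : α} (hx : x ∈ s) :
    ∑ z ∈ s, C (f z) * X ^ (if z = x then 1 else 0)
      = C (f x) * X + C (∑ z ∈ s.erase x, f z) := by
  rw [← add_sum_erase _ _ hx, if_pos rfl, pow_one, map_sum]
  congr 1
  exact sum_congr rfl fun z hz => by rw [if_neg (ne_of_mem_erase hz), pow_zero, mul_one]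

theorem sum_C_prod_mul_X_pow_occupancy [Fintype α] (f : α → R) (x : α) (n : ℕ) :
    ∑ ω : Fin n → α, C (∏ j, f (ω j)) * X ^ occupancy ω x
      = (C (f x) * X + C (∑ z ∈ univ.erase x, f z)) ^ n := by
  rw [← sum_C_mul_X_pow_ite f (mem_univ x)]
  simp_rw [Fintype.sum_pow, prod_C_mul_X_pow_occupancy]

theorem sum_prod_of_occupancy_eq [Fintype α] (f : α → R) (x : α) (n i : ℕ) :
    ∑ ω : Fin n → α, (if occupancy ω x = i then ∏ j, f (ω j) else 0)
      = n.choose i * f x ^ i * (∑ z ∈ univ.erase x, f z) ^ (n - i) := by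
  have h := congrArg (coeff · i) (sum_C_prod_mul_X_pow_occupancy f x n)
  simp only [finsetSum_coeff, coeff_C_mul_X_pow, coeff_C_mul_X_add_C_pow] at h
  simpa only [eq_comm (a := i)] using h

theorem sum_prod_of_occupancy_eq_of_occupancy_eq [Fintype α] (f : α → R) {x y : α}
    (hxy : x ≠ y) (n i k : ℕ) :
    ∑ ω : Fin n → α,
        (if occupancy ω x = i ∧ occupancy ω y = k then ∏ j, f (ω j) else 0)
      = n.choose i * (n - i).choose k * f x ^ i * f y ^ k
          * (∑ z ∈ (univ.erase x).erase y, f z) ^ (n - i - k) := by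
  have h := congrArg (coeff · k)
    (sum_prod_of_occupancy_eq (fun z => C (f z) * X ^ (if z = y then 1 else 0)) x n i)
  simp only [prod_C_mul_X_pow_occupancy, if_neg hxy, pow_zero, mul_one,
    sum_C_mul_X_pow_ite f (mem_erase.2 ⟨hxy.symm, mem_univ y⟩)] at h
  rw [finsetSum_coeff, ← C_pow, ← map_natCast C, ← C_mul, coeff_C_mul,
    coeff_C_mul_X_add_C_pow] at h
  convert h using 1
  · refine sum_congr rfl fun ω _ => ?_
    rw [ite_and, apply_ite (coeff · k), coeff_C_mul_X_pow, coeff_zero]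
    simp only [eq_comm (a := k)]
  · ring

variable [Fintype α]

noncomputable def fingerprint {n : ℕ} (i : ℕ) (ω : Fin n → α) : ℝ :=
  ∑ x, if occupancy ω x = i then 1 else 0

theorem sum_prod_mul_fingerprint (f : α → ℝ) (n i : ℕ) :
    ∑ ω : Fin n → α, (∏ j, f (ω j)) * fingerprint i ω
      = n.choose i * ∑ x, f x ^ i * (∑ z ∈ univ.erase x, f z) ^ (n - i) := by
  simp only [fingerprint, mul_sum, mul_ite, mul_one, mul_zero]
  rw [sum_comm]
  exact sum_congr rfl fun x _ => by rw [sum_prod_of_occupancy_eq]; ring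

theorem sum_prod_mul_fingerprint_sq (f : α → ℝ) (n i : ℕ) :
    ∑ ω : Fin n → α, (∏ j, f (ω j)) * fingerprint i ω ^ 2
      = n.choose i * ∑ x, f x ^ i * (∑ z ∈ univ.erase x, f z) ^ (n - i)
        + ∑ x, ∑ y ∈ univ.erase x, n.choose i * (n - i).choose i * f x ^ i * f y ^ i
            * (∑ z ∈ (univ.erase x).erase y, f z) ^ (n - i - i) := by
  have hsq (ω : Fin n → α) : (∏ j, f (ω j)) * fingerprint i ω ^ 2
      = ∑ x, ∑ y, if occupancy ω x = i ∧ occupancy ω y = i then ∏ j, f (ω j) else 0 := by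
    simp only [fingerprint, sq, sum_mul_sum, ite_zero_mul_ite_zero, mul_one]
    simp only [mul_sum, mul_ite, mul_one, mul_zero]
  have hdiag (x : α) : ∑ ω : Fin n → α,
      (if occupancy ω x = i ∧ occupancy ω x = i then ∏ j, f (ω j) else 0)
        = n.choose i * f x ^ i * (∑ z ∈ univ.erase x, f z) ^ (n - i) := by
    simp only [and_self, sum_prod_of_occupancy_eq]
  simp only [hsq]
  rw [sum_comm, mul_sum, ← sum_add_distrib]
  refine sum_congr rfl fun x _ => ?_
  rw [sum_comm, ← add_sum_erase _ _ (mem_univ x), hdiag]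
  congr 1
  · ring
  · exact sum_congr rfl fun y hy =>
      sum_prod_of_occupancy_eq_of_occupancy_eq f (ne_of_mem_erase hy).symm n i i

end Occupancy

theorem choose_mul_choose_sub_eq_factorial_div {n i : ℕ} (h : 2 * i ≤ n) :
    (n.choose i : ℝ) * (n - i).choose i
      = n.factorial / (i.factorial ^ 2 * (n - 2 * i).factorial) := by
  rw [Nat.cast_choose ℝ (by omega : i ≤ n), Nat.cast_choose ℝ (by omega : i ≤ n - i),
    show n - i - i = n - 2 * i by omega]
  field_simp

theorem integral_pi_eq_sum_prod_measureReal {ι β : Type*} [Fintype ι] [DecidableEq ι]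
    [Fintype β] [MeasurableSpace β] [MeasurableSingletonClass β] (μ : Measure β)
    [IsFiniteMeasure μ] (F : (ι → β) → ℝ) :
    ∫ ω, F ω ∂Measure.pi (fun _ => μ) = ∑ ω, (∏ j, μ.real {ω j}) * F ω := by
  rw [integral_fintype .of_finite]
  refine sum_congr rfl fun ω _ => ?_
  rw [smul_eq_mul, measureReal_def, ← Set.univ_pi_singleton ω, Measure.pi_pi,
    ENNReal.toReal_prod]
  rfl

theorem second_moment_phi_general {X : Type*} [Fintype X] [DecidableEq X]
    [MeasurableSpace X] [MeasurableSingletonClass X]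
    (n i : ℕ)
    (μX : Measure X) [IsProbabilityMeasure μX]
    (p : X → ℝ) (hp : ∀ x, (μX {x}).toReal = p x) :
    (2 * i ≤ n →
      (∫ ω, ((∑ x, if (∑ j, if ω j = x then 1 else 0 : ℕ) = i then 1 else 0 : ℝ) ^ 2)
          ∂(Measure.pi fun _ : Fin n => μX))
        = (n.choose i : ℝ) * (∑ x, p x ^ i * (1 - p x) ^ (n - i))
          + ∑ x, ∑ y ∈ Finset.univ.erase x,
              ((n.factorial : ℝ) / ((i.factorial : ℝ) ^ 2 * ((n - 2 * i).factorial : ℝ)))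
                * p x ^ i * p y ^ i * (1 - p x - p y) ^ (n - 2 * i)) ∧
    (n < 2 * i →
      (∫ ω, ((∑ x, if (∑ j, if ω j = x then 1 else 0 : ℕ) = i then 1 else 0 : ℝ) ^ 2)
          ∂(Measure.pi fun _ : Fin n => μX))
        = (n.choose i : ℝ) * (∑ x, p x ^ i * (1 - p x) ^ (n - i))) ∧
    variance
        (fun ω => (∑ x, if (∑ j, if ω j = x then 1 else 0 : ℕ) = i then (1 : ℝ) else 0))
        (Measure.pi fun _ : Fin n => μX)
      = (∫ ω, ((∑ x, if (∑ j, if ω j = x then 1 else 0 : ℕ) = i then 1 else 0 : ℝ) ^ 2)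
          ∂(Measure.pi fun _ : Fin n => μX))
        - ((n.choose i : ℝ) * (∑ x, p x ^ i * (1 - p x) ^ (n - i))) ^ 2 := by
  have hp' (x : X) : μX.real {x} = p x := hp x
  have hsum_erase (x : X) : ∑ y ∈ univ.erase x, p y = 1 - p x := by
    rw [sum_erase_eq_sub (mem_univ x), ← funext hp', sum_measureReal_singleton, coe_univ,
      probReal_univ]
  have hsum_erase_erase (x : X) {y : X} (hy : y ∈ univ.erase x) :
      ∑ z ∈ (univ.erase x).erase y, p z = 1 - p x - p y := by
    rw [sum_erase_eq_sub hy, hsum_erase]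
  have hmean : ∫ ω, fingerprint i ω ∂Measure.pi (fun _ : Fin n => μX)
      = n.choose i * ∑ x, p x ^ i * (1 - p x) ^ (n - i) := by
    simp only [integral_pi_eq_sum_prod_measureReal, hp', sum_prod_mul_fingerprint, hsum_erase]
  have hsecond : ∫ ω, fingerprint i ω ^ 2 ∂Measure.pi (fun _ : Fin n => μX)
      = n.choose i * ∑ x, p x ^ i * (1 - p x) ^ (n - i)
        + ∑ x, ∑ y ∈ univ.erase x, n.choose i * (n - i).choose i * p x ^ i * p y ^ i
            * (1 - p x - p y) ^ (n - i - i) := by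
    rw [integral_pi_eq_sum_prod_measureReal]
    simp only [hp', sum_prod_mul_fingerprint_sq, hsum_erase]
    congr 1
    exact sum_congr rfl fun x _ => sum_congr rfl fun y hy => by rw [hsum_erase_erase x hy]
  refine ⟨fun h => hsecond.trans ?_, fun h => hsecond.trans ?_, ?_⟩
  · simp only [choose_mul_choose_sub_eq_factorial_div h, show n - i - i = n - 2 * i by omega]
  · simp [Nat.choose_eq_zero_of_lt (by omega : n - i < i)]
  · rw [variance_eq_sub .of_discrete, ← hmean]
    rfl

/-- For `Φ_i = ∑ x, 1[N x = i]` from a multinomial sample of size `n`: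
if `2i ≤ n` then
`E[Φ_i²] = f_i(n) + ∑_{x≠y} (n!/(i!²(n-2i)!)) p_x^i p_y^i (1-p_x-p_y)^(n-2i)`;
if `2i > n` then `E[Φ_i²] = f_i(n)`, where `f_i(n) = C(n,i) ∑ x p_x^i (1-p_x)^(n-i)`.
Consequently `Var(Φ_i) = E[Φ_i²] - f_i(n)²`. -/
theorem second_moment_phi {X : Type*} [Fintype X] [DecidableEq X]
    [MeasurableSpace X] [MeasurableSingletonClass X]
    (n i : ℕ) (hi1 : 1 ≤ i) (hin : i ≤ n)
    (μX : Measure X) [IsProbabilityMeasure μX]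
    (p : X → ℝ) (hp : ∀ x, (μX {x}).toReal = p x) :
    (2 * i ≤ n →
      (∫ ω, ((∑ x, if (∑ j, if ω j = x then 1 else 0 : ℕ) = i then 1 else 0 : ℝ) ^ 2)
          ∂(Measure.pi fun _ : Fin n => μX))
        = (n.choose i : ℝ) * (∑ x, p x ^ i * (1 - p x) ^ (n - i))
          + ∑ x, ∑ y ∈ Finset.univ.erase x,
              ((n.factorial : ℝ) / ((i.factorial : ℝ) ^ 2 * ((n - 2 * i).factorial : ℝ)))
                * p x ^ i * p y ^ i * (1 - p x - p y) ^ (n - 2 * i)) ∧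
    (n < 2 * i →
      (∫ ω, ((∑ x, if (∑ j, if ω j = x then 1 else 0 : ℕ) = i then 1 else 0 : ℝ) ^ 2)
          ∂(Measure.pi fun _ : Fin n => μX))
        = (n.choose i : ℝ) * (∑ x, p x ^ i * (1 - p x) ^ (n - i))) ∧
    variance
        (fun ω => (∑ x, if (∑ j, if ω j = x then 1 else 0 : ℕ) = i then (1 : ℝ) else 0))
        (Measure.pi fun _ : Fin n => μX)
      = (∫ ω, ((∑ x, if (∑ j, if ω j = x then 1 else 0 : ℕ) = i then 1 else 0 : ℝ) ^ 2)
          ∂(Measure.pi fun _ : Fin n => μX))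
        - ((n.choose i : ℝ) * (∑ x, p x ^ i * (1 - p x) ^ (n - i))) ^ 2 :=
  second_moment_phi_general n i μX p hp
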